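/- arXiv:1507.01071 — 2 statements merged into one kernel-verified Lean document; each statement's English description precedes it below -/
import Mathlib

section
/- If piecewise-linear boundaries b_n converge uniformly to b on [t_0, τ], then the survival probabilities converge: lim_{n→∞} P(T_{b_n} > τ) = P(T_b > τ), for a standard Brownian motion W starting at x_0 < b(t_0), provided P(sup_{t∈[t_0,τ]}(W(t) - b(t)) = 0) = 0. -/
/-!
Up to the null event `sup_{[t₀, τ]} (X - b) = 0`, survival past `τ` is the event
`sup_{[t₀, τ]} (X - b) ≤ 0`. Moving the boundary by at most `δ` moves this supremum by at most
`δ`, so the survival probability for `bn n` is squeezed between `F (-δ)` and `F δ`, where `F` is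
the distribution function of the supremum. `F` is continuous at `0` because the supremum has no
atom there.
-/

open MeasureTheory ProbabilityTheory Set

noncomputable section

/-- A (two-sided) standard Brownian motion: continuous paths, `W 0 = 0`,
Gaussian increments and independent increments. -/
def IsStandardBM {Ω : Type*} [MeasureSpace Ω] (W : ℝ → Ω → ℝ) : Prop :=
  (∀ ω, Continuous fun t => W t ω) ∧
  (∀ ω, W 0 ω = 0) ∧
  (∀ s t : ℝ, s ≤ t →
    Measure.map (fun ω => W t ω - W s ω) (volume : Measure Ω)
      = gaussianReal 0 (Real.toNNReal (t - s))) ∧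
  (∀ n : ℕ, ∀ t : Fin (n + 1) → ℝ, Monotone t →
    iIndepFun (m := fun _ => Real.measurableSpace)
      (fun i : Fin n => fun ω => W (t i.succ) ω - W (t i.castSucc) ω)
      (volume : Measure Ω))

/-- First passage time of the process `X` to the boundary `c` after time `t₀`,
valued in `EReal`, with the convention `inf ∅ = ⊤`. -/
def FPT {Ω : Type*} (X : ℝ → Ω → ℝ) (c : ℝ → ℝ) (t₀ : ℝ) (ω : Ω) : EReal :=
  ⨅ t : {t : ℝ // t₀ < t ∧ c t ≤ X t ω}, ((t : ℝ) : EReal)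

open Filter Topology

-- `sSup ∅ = 0`, so `supExcess` is `0` when `τ < t₀`.
def supExcess {Ω : Type*} (X : ℝ → Ω → ℝ) (c : ℝ → ℝ) (t₀ τ : ℝ) (ω : Ω) : ℝ :=
  sSup ((fun t => X t ω - c t) '' Icc t₀ τ)

section FirstPassage

variable {Ω : Type*} {X : ℝ → Ω → ℝ} {c c' : ℝ → ℝ} {t₀ τ : ℝ} {ω : Ω}

lemma lt_FPT_of_supExcess_neg (hX : Continuous fun t => X t ω) (hc : Continuous c)
    (h : supExcess X c t₀ τ ω < 0) : (τ : EReal) < FPT X c t₀ ω := by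
  have hg : Continuous fun t => X t ω - c t := hX.sub hc
  have hbdd : BddAbove ((fun t => X t ω - c t) '' Icc t₀ τ) :=
    (isCompact_Icc.image hg).bddAbove
  have hττ : t₀ ≤ τ := by
    by_contra hlt
    simp [supExcess, Icc_eq_empty hlt] at h
  have hle_sup : ∀ t ∈ Icc t₀ τ, X t ω - c t ≤ supExcess X c t₀ τ ω :=
    fun t ht => le_csSup hbdd (mem_image_of_mem _ ht)
  obtain ⟨u, hτu, hu⟩ : ∃ u, τ < u ∧ Ico τ u ⊆ {t | X t ω - c t < 0} :=
    exists_Ico_subset_of_mem_nhds ((isOpen_lt hg continuous_const).mem_nhds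
      ((hle_sup τ ⟨hττ, le_rfl⟩).trans_lt h)) ⟨τ + 1, lt_add_one τ⟩
  have hu_le : (u : EReal) ≤ FPT X c t₀ ω := by
    refine le_iInf fun ⟨s, hs₀, hsc⟩ => EReal.coe_le_coe_iff.2 (not_lt.1 fun hsu => ?_)
    have hneg : X s ω - c s < 0 := by
      rcases le_or_gt s τ with hsτ | hτs
      · exact (hle_sup s ⟨hs₀.le, hsτ⟩).trans_lt h
      · exact hu ⟨hτs.le, hsu⟩
    linarith
  exact (EReal.coe_lt_coe_iff.2 hτu).trans_le hu_le

lemma supExcess_nonpos_of_lt_FPT (h : (τ : EReal) < FPT X c t₀ ω) (h₀ : X t₀ ω < c t₀) :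
    supExcess X c t₀ τ ω ≤ 0 := by
  refine Real.sSup_nonpos (forall_mem_image.2 fun t ⟨ht₀, htτ⟩ => ?_)
  rcases ht₀.eq_or_lt with rfl | ht
  · linarith
  · by_contra hpos
    have hFPT : FPT X c t₀ ω ≤ t :=
      iInf_le (fun s : {s : ℝ // t₀ < s ∧ c s ≤ X s ω} => ((s : ℝ) : EReal))
        ⟨t, ht, by linarith⟩
    exact h.not_ge (hFPT.trans (EReal.coe_le_coe_iff.2 htτ))

lemma supExcess_le_add (hττ : t₀ ≤ τ) (hX : Continuous fun t => X t ω) (hc : Continuous c)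
    {r : ℝ} (h : ∀ t ∈ Icc t₀ τ, c t - r ≤ c' t) :
    supExcess X c' t₀ τ ω ≤ supExcess X c t₀ τ ω + r := by
  have hbdd : BddAbove ((fun t => X t ω - c t) '' Icc t₀ τ) :=
    (isCompact_Icc.image (hX.sub hc)).bddAbove
  refine csSup_le ((nonempty_Icc.2 hττ).image _) (forall_mem_image.2 fun t ht => ?_)
  change X t ω - c' t ≤ sSup ((fun t => X t ω - c t) '' Icc t₀ τ) + r
  linarith [h t ht, le_csSup hbdd (mem_image_of_mem _ ht)]

lemma setOf_supExcess_le_subset_setOf_lt_FPT (hττ : t₀ ≤ τ) (hX : ∀ ω, Continuous fun t => X t ω)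
    (hc : Continuous c) (hc' : Continuous c') {r δ : ℝ} (hrδ : r < δ)
    (h : ∀ t ∈ Icc t₀ τ, c t - r ≤ c' t) :
    {ω | supExcess X c t₀ τ ω ≤ -δ} ⊆ {ω | (τ : EReal) < FPT X c' t₀ ω} := fun ω hω => by
  have hle : supExcess X c t₀ τ ω ≤ -δ := hω
  exact lt_FPT_of_supExcess_neg (hX ω) hc' (by linarith [supExcess_le_add hττ (hX ω) hc h])

lemma setOf_lt_FPT_subset_setOf_supExcess_le (hττ : t₀ ≤ τ) (hX : ∀ ω, Continuous fun t => X t ω)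
    (hc' : Continuous c') (h₀ : ∀ ω, X t₀ ω < c' t₀) {r : ℝ}
    (h : ∀ t ∈ Icc t₀ τ, c' t - r ≤ c t) :
    {ω | (τ : EReal) < FPT X c' t₀ ω} ⊆ {ω | supExcess X c t₀ τ ω ≤ r} := fun ω hω => by
  change supExcess X c t₀ τ ω ≤ r
  linarith [supExcess_le_add hττ (hX ω) hc' h, supExcess_nonpos_of_lt_FPT hω (h₀ ω)]

/-- Survival past `τ` differs from `supExcess ≤ 0` only on the event `supExcess = 0`. -/
lemma measure_lt_FPT_eq_measure_supExcess_nonpos [MeasurableSpace Ω] {μ : Measure Ω}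
    (hX : ∀ ω, Continuous fun t => X t ω) (hc : Continuous c) (h₀ : ∀ ω, X t₀ ω < c t₀)
    (hnull : μ {ω | supExcess X c t₀ τ ω = 0} = 0) :
    μ {ω | (τ : EReal) < FPT X c t₀ ω} = μ {ω | supExcess X c t₀ τ ω ≤ 0} := by
  refine le_antisymm (measure_mono fun ω hω => supExcess_nonpos_of_lt_FPT hω (h₀ ω)) ?_
  refine measure_mono_ae ((measure_eq_zero_iff_ae_notMem.1 hnull).mono fun ω hω hle => ?_)
  exact lt_FPT_of_supExcess_neg (hX ω) hc (hle.lt_of_ne hω)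

end FirstPassage

/-- Separability reduces the supremum over `s` to one over a countable dense subset. -/
theorem aemeasurable_sSup_image {Ω T α : Type*} [MeasurableSpace Ω] {μ : Measure Ω}
    [TopologicalSpace T] [SecondCountableTopology T]
    [ConditionallyCompleteLinearOrder α] [TopologicalSpace α] [OrderTopology α]
    [SecondCountableTopology α] [MeasurableSpace α] [BorelSpace α]
    {s : Set T} {Y : T → Ω → α} (hcont : ∀ ω, ContinuousOn (fun t => Y t ω) s)
    (hmeas : ∀ t ∈ s, AEMeasurable (Y t) μ) :
    AEMeasurable (fun ω => sSup ((fun t => Y t ω) '' s)) μ := by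
  obtain ⟨D, hD_count, hD_dense⟩ := TopologicalSpace.exists_countable_dense s
  have : Countable D := hD_count.to_subtype
  have hsup : ∀ ω, sSup ((fun t => Y t ω) '' s) = ⨆ d : D, Y d ω := fun ω => by
    rw [image_eq_range]
    exact (hD_dense.ciSup' (hcont ω).domRestrict).symm
  simp_rw [hsup]
  exact AEMeasurable.iSup fun d => hmeas d d.1.2

theorem continuousAt_cdf_of_measure_singleton_eq_zero {μ : Measure ℝ} [IsProbabilityMeasure μ]
    {x : ℝ} (hx : μ {x} = 0) : ContinuousAt (cdf μ) x := by
  have hjump := (cdf μ).measure_singleton x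
  rw [measure_cdf, hx, eq_comm, ENNReal.ofReal_eq_zero, sub_nonpos] at hjump
  rw [(monotone_cdf μ).continuousAt_iff_leftLim_eq_rightLim, (cdf μ).rightLim_eq]
  exact le_antisymm ((monotone_cdf μ).leftLim_le le_rfl) hjump

theorem cdf_map_eq_toReal_measure {Ω : Type*} [MeasurableSpace Ω] {μ : Measure Ω}
    [IsProbabilityMeasure μ] {f : Ω → ℝ} (hf : AEMeasurable f μ) (x : ℝ) :
    cdf (μ.map f) x = (μ {ω | f ω ≤ x}).toReal := by
  have : IsProbabilityMeasure (μ.map f) := Measure.isProbabilityMeasure_map hf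
  rw [cdf_eq_real, measureReal_def, Measure.map_apply_of_aemeasurable hf measurableSet_Iic]
  rfl

theorem tendsto_of_eventually_mem_Icc_of_continuousAt {ι : Type*} {l : Filter ι}
    {g : ℝ → ℝ} {x : ℝ} (hg : ContinuousAt g x) {p : ι → ℝ}
    (h : ∀ δ > 0, ∀ᶠ i in l, p i ∈ Icc (g (x - δ)) (g (x + δ))) :
    Tendsto p l (𝓝 (g x)) := by
  refine Metric.tendsto_nhds.2 fun ε hε => ?_
  obtain ⟨δ, hδ, hgδ⟩ := Metric.continuousAt_iff.1 hg ε hε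
  have hclose : ∀ y, |y - x| < δ → |g y - g x| < ε := fun y hy => hgδ hy
  have hlo := hclose (x - δ / 2) (by rw [abs_lt]; constructor <;> linarith)
  have hhi := hclose (x + δ / 2) (by rw [abs_lt]; constructor <;> linarith)
  filter_upwards [h (δ / 2) (half_pos hδ)] with i ⟨hi₁, hi₂⟩
  rw [Real.dist_eq, abs_lt]
  rw [abs_lt] at hlo hhi
  constructor <;> linarith [hlo.1, hhi.2]

theorem IsStandardBM.aemeasurable_sub {Ω : Type*} [MeasureSpace Ω] {W : ℝ → Ω → ℝ}
    (hW : IsStandardBM W) {s t : ℝ} (hst : s ≤ t) :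
    AEMeasurable (fun ω => W t ω - W s ω) volume :=
  AEMeasurable.of_map_ne_zero (by rw [hW.2.2.1 s t hst]; exact IsProbabilityMeasure.ne_zero _)

/-- if boundaries `bn` converge uniformly to `b` on `[t₀, τ]`, the
survival probabilities of the corresponding FPTs of a Brownian motion started at
`x₀ < b t₀` converge, provided the supremum of `X - b` on `[t₀, τ]` is a.s. nonzero. -/
theorem survival_prob_tendsto_of_tendstoUniformlyOn
    {Ω : Type*} [MeasureSpace Ω] [IsProbabilityMeasure (volume : Measure Ω)]
    (W : ℝ → Ω → ℝ) (hW : IsStandardBM W)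
    (t₀ τ x₀ : ℝ) (hττ : t₀ ≤ τ)
    (X : ℝ → Ω → ℝ) (hX : ∀ t ω, X t ω = x₀ + (W t ω - W t₀ ω))
    (b : ℝ → ℝ) (bn : ℕ → ℝ → ℝ)
    (hb : Continuous b) (hbn : ∀ n, Continuous (bn n)) (hx₀ : x₀ < b t₀)
    (hunif : TendstoUniformlyOn bn b Filter.atTop (Icc t₀ τ))
    (hsup : volume {ω | sSup ((fun t => X t ω - b t) '' Icc t₀ τ) = 0} = 0) :
    Filter.Tendsto
      (fun n => (volume {ω | (τ : EReal) < FPT X (bn n) t₀ ω}).toReal)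
      Filter.atTop
      (nhds ((volume {ω | (τ : EReal) < FPT X b t₀ ω}).toReal)) := by
  have hXc : ∀ ω, Continuous fun t => X t ω := fun ω => by
    simp_rw [hX]
    exact continuous_const.add ((hW.1 ω).sub continuous_const)
  have hXt₀ : ∀ ω, X t₀ ω = x₀ := fun ω => by simp [hX]
  have hM : AEMeasurable (supExcess X b t₀ τ) volume :=
    aemeasurable_sSup_image (fun ω => ((hXc ω).sub hb).continuousOn) fun t ht => by
      simp_rw [hX]
      exact ((hW.aemeasurable_sub ht.1).const_add x₀).sub_const (b t)
  have hF := cdf_map_eq_toReal_measure hM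
  have : IsProbabilityMeasure (volume.map (supExcess X b t₀ τ)) :=
    Measure.isProbabilityMeasure_map hM
  have hF₀ : ContinuousAt (cdf (volume.map (supExcess X b t₀ τ))) 0 :=
    continuousAt_cdf_of_measure_singleton_eq_zero <| by
      rw [Measure.map_apply_of_aemeasurable hM (measurableSet_singleton 0)]
      exact hsup
  rw [measure_lt_FPT_eq_measure_supExcess_nonpos hXc hb (fun ω => (hXt₀ ω).trans_lt hx₀) hsup,
    ← hF]
  refine tendsto_of_eventually_mem_Icc_of_continuousAt hF₀ fun δ hδ => ?_
  filter_upwards [Metric.tendstoUniformlyOn_iff.1 hunif (δ / 2) (half_pos hδ),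
    (hunif.tendsto_at (left_mem_Icc.2 hττ)).eventually_const_lt hx₀] with n hn hn₀
  have hclose : ∀ t ∈ Icc t₀ τ, b t - δ / 2 ≤ bn n t ∧ bn n t - δ ≤ b t := fun t ht => by
    have := abs_lt.1 (Real.dist_eq _ _ ▸ hn t ht)
    constructor <;> linarith [this.1, this.2]
  rw [zero_sub, zero_add, hF, hF]
  exact ⟨ENNReal.toReal_mono (measure_ne_top _ _) <| measure_mono <|
      setOf_supExcess_le_subset_setOf_lt_FPT hττ hXc hb (hbn n) (half_lt_self hδ)
        fun t ht => (hclose t ht).1,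
    ENNReal.toReal_mono (measure_ne_top _ _) <| measure_mono <|
      setOf_lt_FPT_subset_setOf_supExcess_le hττ hXc (hbn n) (fun ω => (hXt₀ ω).trans_lt hn₀)
        fun t ht => (hclose t ht).2⟩
end
end

section
/- The function t ↦ (α - x_0)/√(2πσ²t³) · exp(-[α - x_0 - (μ-β)t]²/(2σ²t)) integrates to 1 over (0, ∞) whenever α > x_0 and μ > β, i.e., the first passage time of a drifted Brownian motion to a linear boundary with slope less than the drift is almost surely finite. -/
/-!
Normalise by `σ`: with `p = (μ - β) / σ` and `q = (α - x₀) / σ` the integrand is the density of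
the first time `W t + p t` reaches `q`. Its antiderivative is the Bachelier–Lévy distribution
function `Φ(p√t - q/√t) + e^{2pq} Φ(-p√t - q/√t)`, which differentiates back to the density
because `e^{2pq} φ(p√t + q/√t) = φ(p√t - q/√t)`. It tends to `0` as `t → 0⁺`, and to `1` as
`t → ∞` because the drift `p` is positive, so the integral is `1`.
-/

open MeasureTheory Set Filter Topology ProbabilityTheory Real

noncomputable section

theorem integral_Ioi_of_hasDerivAt_of_nonneg_of_tendsto {g g' : ℝ → ℝ} {a l₀ l : ℝ}
    (hderiv : ∀ x ∈ Ioi a, HasDerivAt g (g' x) x) (hg' : ∀ x ∈ Ioi a, 0 ≤ g' x)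
    (h₀ : Tendsto g (𝓝[>] a) (𝓝 l₀)) (h : Tendsto g atTop (𝓝 l)) :
    ∫ x in Ioi a, g' x = l - l₀ := by
  set G := Function.update g a l₀
  have hcont : ContinuousWithinAt G (Ici a) a := by
    rwa [continuousWithinAt_update_same, Ici_sdiff_left]
  have hderivG : ∀ x ∈ Ioi a, HasDerivAt G (g' x) x := fun x hx =>
    (hderiv x hx).congr_of_eventuallyEq <| eventually_of_mem (isOpen_Ioi.mem_nhds hx)
      fun y hy => Function.update_of_ne hy.ne' _ _
  have hG : Tendsto G atTop (𝓝 l) := h.congr' <| eventually_of_mem (Ioi_mem_atTop a)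
    fun y hy => (Function.update_of_ne hy.ne' _ _).symm
  simpa [G] using integral_Ioi_of_hasDerivAt_of_nonneg hcont hderivG hg' hG

theorem hasDerivAt_integral_Iic {E : Type*} [NormedAddCommGroup E] [NormedSpace ℝ E]
    [CompleteSpace E] {f : ℝ → E} (hf : Integrable f) (hc : Continuous f) (x : ℝ) :
    HasDerivAt (fun x => ∫ y in Iic x, f y) (f x) x := by
  have hsplit : ∀ z, ∫ y in Iic z, f y = (∫ y in Iic 0, f y) + ∫ y in (0 : ℝ)..z, f y :=
    fun z => by
      rw [← intervalIntegral.integral_Iic_sub_Iic hf.integrableOn hf.integrableOn,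
        add_sub_cancel]
  rw [funext hsplit]
  exact (intervalIntegral.integral_hasDerivAt_right hf.intervalIntegrable
    (hc.stronglyMeasurableAtFilter _ _) hc.continuousAt).const_add _

theorem continuous_gaussianPDFReal (μ : ℝ) (v : NNReal) : Continuous (gaussianPDFReal μ v) := by
  unfold gaussianPDFReal
  fun_prop

theorem cdf_gaussianReal_eq_integral (μ : ℝ) {v : NNReal} (hv : v ≠ 0) (x : ℝ) :
    cdf (gaussianReal μ v) x = ∫ y in Iic x, gaussianPDFReal μ v y := by
  rw [cdf_eq_real, measureReal_def, gaussianReal_apply_eq_integral μ hv, ENNReal.toReal_ofReal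
    (setIntegral_nonneg measurableSet_Iic fun y _ => gaussianPDFReal_nonneg μ v y)]

theorem hasDerivAt_cdf_gaussianReal (μ : ℝ) {v : NNReal} (hv : v ≠ 0) (x : ℝ) :
    HasDerivAt (cdf (gaussianReal μ v)) (gaussianPDFReal μ v x) x := by
  rw [funext (cdf_gaussianReal_eq_integral μ hv)]
  exact hasDerivAt_integral_Iic (integrable_gaussianPDFReal μ v) (continuous_gaussianPDFReal μ v) x

variable {p q t : ℝ}

theorem hasDerivAt_mul_sqrt_sub_div_sqrt (p q : ℝ) (ht : 0 < t) :
    HasDerivAt (fun t => p * √t - q / √t) ((p + q / t) / (2 * √t)) t := by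
  have hs : √t ≠ 0 := (sqrt_pos.2 ht).ne'
  have hsqrt := hasDerivAt_sqrt ht.ne'
  refine ((hsqrt.const_mul p).sub ((hasDerivAt_const t q).div hsqrt hs)).congr_deriv ?_
  rw [sq_sqrt ht.le]
  field_simp
  ring

theorem tendsto_mul_sqrt_sub_div_sqrt_atTop (hp : 0 < p) (q : ℝ) :
    Tendsto (fun t => p * √t - q / √t) atTop atTop := by
  have hsqrt : Tendsto (√·) atTop atTop := tendsto_sqrt_atTop
  have hsecond : Tendsto (fun t => q / √t) atTop (𝓝 0) := by
    simpa [div_eq_mul_inv] using (tendsto_inv_atTop_zero.comp hsqrt).const_mul q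
  simpa [sub_eq_add_neg] using (hsqrt.const_mul_atTop hp).atTop_add hsecond.neg

theorem tendsto_mul_sqrt_sub_div_sqrt_nhdsGT (p : ℝ) (hq : 0 < q) :
    Tendsto (fun t => p * √t - q / √t) (𝓝[>] 0) atBot := by
  have hsqrt : Tendsto (√·) (𝓝[>] 0) (𝓝[>] 0) := by
    refine tendsto_nhdsWithin_iff.2
      ⟨?_, eventually_nhdsWithin_of_forall fun t ht => sqrt_pos.2 ht⟩
    exact (continuous_sqrt.tendsto' 0 0 sqrt_zero).mono_left nhdsWithin_le_nhds
  have hfirst : Tendsto (fun t => p * √t) (𝓝[>] 0) (𝓝 0) := by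
    simpa using (tendsto_nhds_of_tendsto_nhdsWithin hsqrt).const_mul p
  have hsecond : Tendsto (fun t => q / √t) (𝓝[>] 0) atTop := by
    simpa [div_eq_mul_inv] using (tendsto_inv_nhdsGT_zero.comp hsqrt).const_mul_atTop hq
  simpa [sub_eq_add_neg] using hfirst.add_atBot (tendsto_neg_atTop_atBot.comp hsecond)

theorem exp_mul_gaussianPDFReal_add (p q : ℝ) (ht : 0 < t) :
    exp (2 * p * q) * gaussianPDFReal 0 1 (p * √t + q / √t) =
      gaussianPDFReal 0 1 (p * √t - q / √t) := by
  have hs : √t ≠ 0 := (sqrt_pos.2 ht).ne'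
  simp only [gaussianPDFReal, NNReal.coe_one, mul_left_comm (exp _), ← exp_add]
  congr 2
  field_simp
  ring

def firstPassageCDF (p q t : ℝ) : ℝ :=
  cdf (gaussianReal 0 1) (p * √t - q / √t) +
    exp (2 * p * q) * cdf (gaussianReal 0 1) (-p * √t - q / √t)

def firstPassageDensity (p q t : ℝ) : ℝ :=
  q / (t * √t) * gaussianPDFReal 0 1 (p * √t - q / √t)

theorem hasDerivAt_firstPassageCDF (p q : ℝ) (ht : 0 < t) :
    HasDerivAt (firstPassageCDF p q) (firstPassageDensity p q t) t := by
  have hΦ := hasDerivAt_cdf_gaussianReal 0 one_ne_zero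
  have hsum := ((hΦ _).comp t (hasDerivAt_mul_sqrt_sub_div_sqrt p q ht)).add
    (((hΦ _).comp t (hasDerivAt_mul_sqrt_sub_div_sqrt (-p) q ht)).const_mul (exp (2 * p * q)))
  refine hsum.congr_deriv ?_
  have hsymm : gaussianPDFReal 0 1 (-p * √t - q / √t) =
      gaussianPDFReal 0 1 (p * √t + q / √t) := by
    simp only [gaussianPDFReal]
    ring_nf
  have hs : √t ≠ 0 := (sqrt_pos.2 ht).ne'
  rw [hsymm, ← mul_assoc, exp_mul_gaussianPDFReal_add p q ht, firstPassageDensity]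
  field_simp
  ring

theorem tendsto_firstPassageCDF_atTop (hp : 0 < p) (q : ℝ) :
    Tendsto (firstPassageCDF p q) atTop (𝓝 1) := by
  have hneg : Tendsto (fun t => -p * √t - q / √t) atTop atBot :=
    (tendsto_neg_atTop_atBot.comp (tendsto_mul_sqrt_sub_div_sqrt_atTop hp (-q))).congr
      fun t => by simp only [Function.comp]; ring
  have h := ((tendsto_cdf_atTop (gaussianReal 0 1)).comp
    (tendsto_mul_sqrt_sub_div_sqrt_atTop hp q)).add
    (((tendsto_cdf_atBot (gaussianReal 0 1)).comp hneg).const_mul (exp (2 * p * q)))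
  rwa [mul_zero, add_zero] at h

theorem tendsto_firstPassageCDF_nhdsGT (p : ℝ) (hq : 0 < q) :
    Tendsto (firstPassageCDF p q) (𝓝[>] 0) (𝓝 0) := by
  have h := ((tendsto_cdf_atBot (gaussianReal 0 1)).comp
    (tendsto_mul_sqrt_sub_div_sqrt_nhdsGT p hq)).add
    (((tendsto_cdf_atBot (gaussianReal 0 1)).comp
      (tendsto_mul_sqrt_sub_div_sqrt_nhdsGT (-p) hq)).const_mul (exp (2 * p * q)))
  rwa [mul_zero, add_zero] at h

theorem firstPassageDensity_nonneg (p : ℝ) (hq : 0 ≤ q) (ht : 0 ≤ t) :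
    0 ≤ firstPassageDensity p q t :=
  mul_nonneg (by positivity) (gaussianPDFReal_nonneg 0 1 _)

theorem integral_firstPassageDensity (hp : 0 < p) (hq : 0 < q) :
    ∫ t in Ioi 0, firstPassageDensity p q t = 1 := by
  have h := integral_Ioi_of_hasDerivAt_of_nonneg_of_tendsto
    (fun t ht => hasDerivAt_firstPassageCDF p q ht)
    (fun t ht => firstPassageDensity_nonneg p hq.le (le_of_lt ht))
    (tendsto_firstPassageCDF_nhdsGT p hq) (tendsto_firstPassageCDF_atTop hp q)
  rwa [sub_zero] at h

theorem firstPassageDensity_div_div {a c σ : ℝ} (hσ : 0 < σ) (ht : 0 < t) :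
    firstPassageDensity (c / σ) (a / σ) t =
      a / √(2 * π * σ ^ 2 * t ^ 3) * exp (-(a - c * t) ^ 2 / (2 * σ ^ 2 * t)) := by
  obtain ⟨r, hr, rfl⟩ : ∃ r, 0 < r ∧ r ^ 2 = t := ⟨√t, sqrt_pos.2 ht, sq_sqrt ht.le⟩
  have hroot : √(2 * π * σ ^ 2 * (r ^ 2) ^ 3) = √(2 * π) * (σ * r ^ 3) := by
    rw [← sqrt_sq (by positivity : 0 ≤ σ * r ^ 3), ← sqrt_mul (by positivity)]
    ring_nf
  have hexponent : -(c / σ * r - a / σ / r) ^ 2 / 2 =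
      -(a - c * r ^ 2) ^ 2 / (2 * σ ^ 2 * r ^ 2) := by
    field_simp
    ring
  simp only [firstPassageDensity, gaussianPDFReal, NNReal.coe_one, mul_one, sub_zero,
    sqrt_sq hr.le, hroot, hexponent]
  field_simp

/-- the inverse Gaussian density of the FPT of a drifted Brownian
motion to a linear boundary with slope less than the drift integrates to `1`
over `(0, ∞)`: the passage time is almost surely finite. -/
theorem inverseGaussian_density_integrates_to_one
    (α x₀ μ β σ : ℝ) (hα : x₀ < α) (hβ : β < μ) (hσ : 0 < σ) :
    (∫ t in Ioi (0 : ℝ),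
        (α - x₀) / Real.sqrt (2 * Real.pi * σ ^ 2 * t ^ 3) *
          Real.exp (-(α - x₀ - (μ - β) * t) ^ 2 / (2 * σ ^ 2 * t))) = 1 := by
  rw [← setIntegral_congr_fun measurableSet_Ioi fun t ht => firstPassageDensity_div_div hσ ht]
  exact integral_firstPassageDensity (div_pos (sub_pos.2 hβ) hσ) (div_pos (sub_pos.2 hα) hσ)
end
end
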